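/- arXiv:1005.0142 — 3 statements merged into one kernel-verified Lean document; each statement's English description precedes it below -/
import Mathlib

section
/- Let G be the group with presentation ⟨a, b, c ∣ a² = b² = c² = (abc)² = 1⟩. Then the kernel G⁰ of the homomorphism G → ℤ/2ℤ sending each generator a, b, c to 1 (i.e., the subgroup of elements represented by words of even length in the generators) is a commutative subgroup of G. -/
open FreeGroup

/-- Relators of the group `⟨a, b, c ∣ a² = b² = c² = (abc)² = 1⟩`. -/
def P6rels : Set (FreeGroup (Fin 3)) :=
  {(of 0) ^ 2, (of 1) ^ 2, (of 2) ^ 2, (of 0 * of 1 * of 2) ^ 2}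

/-- The group `G = ⟨a, b, c ∣ a² = b² = c² = (abc)² = 1⟩`. -/
abbrev P6G := PresentedGroup P6rels

/-- The parity homomorphism `G → ℤ/2ℤ` sending each generator to `1`. -/
def parity : P6G →* Multiplicative (ZMod 2) :=
  PresentedGroup.toGroup (f := fun _ => Multiplicative.ofAdd (1 : ZMod 2)) (by
    intro r hr
    rcases hr with rfl | rfl | rfl | rfl <;>
      simp [map_pow, map_mul] <;> decide)


/-!
Geometrically `G` is the wallpaper group `p2`, with `a`, `b`, `c` acting as half-turns, and `G⁰` is
its translation lattice, generated by `ab` and `bc`. These commute because `(abc)² = 1` forces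
`cab = bac`. Conjugation by `a` inverts both, so `G = ⟨a⟩ · ⟨ab, bc⟩`, and since `a` is odd the
even elements are exactly `⟨ab, bc⟩`.
-/

open Subgroup Pointwise

theorem MonoidHom.ker_le_of_sup_eq_top {G Q : Type*} [Group G] [Group Q] (φ : G →* Q)
    {H S : Subgroup G} (hH : H ≤ normalizer (S : Set G)) (hsup : H ⊔ S = ⊤) (hS : S ≤ φ.ker)
    (hHker : ∀ h ∈ H, φ h = 1 → h ∈ S) : φ.ker ≤ S := by
  intro g hg
  obtain ⟨h, hh, s, hs, rfl⟩ : g ∈ (H : Set G) * (S : Set G) := by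
    rw [← coe_mul_of_left_le_normalizer_right H S hH, hsup]; trivial
  rw [MonoidHom.mem_ker, _root_.map_mul, MonoidHom.mem_ker.mp (hS hs), mul_one] at hg
  exact mul_mem (hHker h hh hg) hs

namespace P6G

def a : P6G := PresentedGroup.of 0
def b : P6G := PresentedGroup.of 1
def c : P6G := PresentedGroup.of 2

lemma of_mul_self (i : Fin 3) : (PresentedGroup.of i : P6G) * PresentedGroup.of i = 1 := by
  have h := PresentedGroup.one_of_mem (rels := P6rels) (x := of i ^ 2)
    (by fin_cases i <;> simp [P6rels])
  rwa [map_pow, pow_two] at h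

lemma a_mul_self : a * a = 1 := of_mul_self 0
lemma b_mul_self : b * b = 1 := of_mul_self 1
lemma c_mul_self : c * c = 1 := of_mul_self 2

lemma abc_mul_self : a * b * c * (a * b * c) = 1 := by
  have h := PresentedGroup.one_of_mem (rels := P6rels) (x := (of 0 * of 1 * of 2) ^ 2)
    (by simp [P6rels])
  rwa [map_pow, pow_two, _root_.map_mul, _root_.map_mul] at h

lemma a_inv : a⁻¹ = a := inv_eq_of_mul_eq_one_right a_mul_self
lemma b_inv : b⁻¹ = b := inv_eq_of_mul_eq_one_right b_mul_self
lemma c_inv : c⁻¹ = c := inv_eq_of_mul_eq_one_right c_mul_self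
lemma abc_inv : (a * b * c)⁻¹ = a * b * c := inv_eq_of_mul_eq_one_right abc_mul_self

lemma ab_mul_bc : a * b * (b * c) = b * c * (a * b) := by
  calc a * b * (b * c) = a * (b * b) * c := by group
    _ = a⁻¹ * c⁻¹ := by rw [b_mul_self, mul_one, a_inv, c_inv]
    _ = b * (c * (a * b * c)⁻¹ * c⁻¹) := by group
    _ = b * c * (a * b) := by rw [abc_inv]; group

lemma conj_a_ab : a * (a * b) * a⁻¹ = (a * b)⁻¹ := by
  calc a * (a * b) * a⁻¹ = a * a * b⁻¹⁻¹ * a⁻¹ := by group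
    _ = (a * b)⁻¹ := by rw [a_mul_self, b_inv, one_mul, mul_inv_rev]

lemma conj_a_bc : a * (b * c) * a⁻¹ = (b * c)⁻¹ := by
  calc a * (b * c) * a⁻¹ = (a * b * c)⁻¹ * a⁻¹⁻¹ := by rw [abc_inv, inv_inv, a_inv]; group
    _ = (b * c)⁻¹ := by group

def translations : Subgroup P6G := closure {a * b, b * c}

instance : IsMulCommutative translations := isMulCommutative_closure <| by
  simp only [Set.mem_insert_iff, Set.mem_singleton_iff]
  rintro _ (rfl | rfl) _ (rfl | rfl) <;> first | rfl | exact ab_mul_bc | exact ab_mul_bc.symm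

lemma a_mem_normalizer_translations : a ∈ normalizer (translations : Set P6G) := by
  rw [mem_normalizer_iff_map_conj_eq, translations, MonoidHom.map_closure]
  simp only [Set.image_pair, MonoidHom.coe_coe, MulAut.conj_apply, conj_a_ab, conj_a_bc]
  rw [← Set.inv_singleton, ← Set.inv_insert, closure_inv]

lemma zpowers_a_sup_translations : zpowers a ⊔ translations = ⊤ := by
  rw [eq_top_iff, ← PresentedGroup.closure_range_of, closure_le]
  rintro _ ⟨i, rfl⟩
  have ha : a ∈ zpowers a ⊔ translations := mem_sup_left (mem_zpowers a)
  have hab : a * b ∈ zpowers a ⊔ translations := mem_sup_right (subset_closure (by simp))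
  have hbc : b * c ∈ zpowers a ⊔ translations := mem_sup_right (subset_closure (by simp))
  fin_cases i
  · exact ha
  · change b ∈ zpowers a ⊔ translations
    simpa [← mul_assoc, a_mul_self] using mul_mem ha hab
  · change c ∈ zpowers a ⊔ translations
    simpa [← mul_assoc, a_mul_self, b_mul_self] using mul_mem (mul_mem ha hab) hbc

lemma parity_of (i : Fin 3) : parity (PresentedGroup.of i) = Multiplicative.ofAdd 1 :=
  PresentedGroup.toGroup.of _

lemma translations_le_ker_parity : translations ≤ parity.ker := by
  rw [translations, closure_le]
  rintro _ (rfl | rfl) <;>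
    simp only [a, b, c, SetLike.mem_coe, MonoidHom.mem_ker, _root_.map_mul, parity_of] <;> decide

lemma mem_translations_of_mem_zpowers_a {g : P6G} (hg : g ∈ zpowers a) (h : parity g = 1) :
    g ∈ translations := by
  obtain ⟨n, rfl⟩ := mem_zpowers_iff.mp hg
  obtain ⟨k, rfl | rfl⟩ := Int.even_or_odd' n
  · simp [zpow_mul, pow_two, a_mul_self, one_mem]
  · rw [zpow_add_one, zpow_mul, zpow_two, a_mul_self, one_zpow, one_mul] at h
    exact absurd h (by rw [a, parity_of]; decide)

lemma ker_parity_eq_translations : parity.ker = translations :=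
  le_antisymm
    (parity.ker_le_of_sup_eq_top (zpowers_le.mpr a_mem_normalizer_translations)
      zpowers_a_sup_translations translations_le_ker_parity
      fun _ hg => mem_translations_of_mem_zpowers_a hg)
    translations_le_ker_parity

end P6G

/-- The kernel `G⁰` of the length-parity homomorphism is commutative. -/
theorem kernel_parity_commutative :
    ∀ x ∈ parity.ker, ∀ y ∈ parity.ker, x * y = y * x := by
  rw [P6G.ker_parity_eq_translations]
  exact fun x hx y hy => setLike_mul_comm hx hy
end

section
/- Let G be a group generated by elements h₀, h₁, h_c satisfying h₀² = h₁² = h_c² = (h₀h₁h_c)² = 1. Then G is virtually commutative: the set of elements expressible as products of an even number of the generators forms a commutative normal subgroup of index at most 2. -/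
/-! Even words are products of pairs `s * t` of generators, and `s * t = (h₁ * s)⁻¹ * (h₁ * t)`;
since each `h₁ * s` is `1`, `h₁ * h_c` or the inverse of `h₀ * h₁`, every even word lies in the
subgroup generated by `h₀ * h₁` and `h₁ * h_c`, and these two commute because `(h₀ h₁ h_c)² = 1`.
Every element is an even word or becomes one after multiplication by `h₀`, so the even words have
index at most 2, which also makes them normal. -/

open Pointwise

namespace Subgroup

variable {G : Type*} [Group G]

theorem index_eq_one_or_eq_two_of_forall_mul_mem_or_mem {H : Subgroup G} (a : G)
    (h : ∀ g, a * g ∈ H ∨ g ∈ H) : H.index = 1 ∨ H.index = 2 := by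
  by_cases ha : a ∈ H
  · left
    rw [index_eq_one, eq_top_iff']
    intro g
    exact (h g).elim (fun hag => by simpa using H.mul_mem (H.inv_mem ha) hag) id
  · exact .inr (index_eq_two_iff_exists_notMem_and'.2 ⟨a, ha, h⟩)

theorem normal_of_index_eq_one_or_eq_two {H : Subgroup G} (h : H.index = 1 ∨ H.index = 2) :
    H.Normal :=
  h.elim normal_of_index_eq_one normal_of_index_eq_two

variable {S : Set G}

theorem list_prod_mem_closure_mul_self :
    ∀ l : List G, (∀ x ∈ l, x ∈ S) → Even l.length → l.prod ∈ closure (S * S)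
  | [], _, _ => one_mem _
  | [_], _, hl => absurd hl (by simp)
  | x :: y :: l, hS, hl => by
    rw [List.prod_cons, List.prod_cons, ← mul_assoc]
    refine mul_mem (subset_closure (Set.mul_mem_mul (hS x (by simp)) (hS y (by simp))))
      (list_prod_mem_closure_mul_self l (fun z hz => hS z (by simp [hz])) ?_)
    simpa [Nat.even_add_one] using hl

theorem mem_closure_mul_self_iff (hS : S⁻¹ ⊆ S) {g : G} :
    g ∈ closure (S * S) ↔ ∃ l : List G, (∀ x ∈ l, x ∈ S) ∧ Even l.length ∧ g = l.prod := by
  refine ⟨fun hg => ?_, fun ⟨l, hlS, hl, hg⟩ => hg ▸ list_prod_mem_closure_mul_self l hlS hl⟩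
  induction hg using closure_induction with
  | mem _ hg =>
    obtain ⟨x, hx, y, hy, rfl⟩ := hg
    exact ⟨[x, y], by simp [hx, hy], by simp, by simp⟩
  | one => exact ⟨[], by simp, by simp, by simp⟩
  | mul _ _ _ _ ihg ihh =>
    obtain ⟨l, hlS, hl, rfl⟩ := ihg
    obtain ⟨m, hmS, hm, rfl⟩ := ihh
    refine ⟨l ++ m, fun x hx => ?_, by simpa using hl.add hm, List.prod_append.symm⟩
    exact (List.mem_append.1 hx).elim (hlS x) (hmS x)
  | inv _ _ ih =>
    obtain ⟨l, hlS, hl, rfl⟩ := ih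
    refine ⟨(l.map (·⁻¹)).reverse, ?_, by simpa using hl, List.prod_inv_reverse l⟩
    simpa using fun x hx => hS (Set.mem_inv.2 (hlS _ hx))

theorem closure_mul_self_le_of_forall_mul_mem (hS : S⁻¹ ⊆ S) {K : Subgroup G} (a : G)
    (h : ∀ s ∈ S, a * s ∈ K) : closure (S * S) ≤ K := by
  rw [closure_le]
  rintro _ ⟨s, hs, t, ht, rfl⟩
  show s * t ∈ K
  rw [show s * t = (a * s⁻¹)⁻¹ * (a * t) by group]
  exact mul_mem (inv_mem (h _ (hS (Set.inv_mem_inv.2 hs)))) (h t ht)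

theorem mul_mem_closure_mul_self_or_mem (hS : S⁻¹ ⊆ S) {a : G} (ha : a ∈ S) {g : G}
    (hg : g ∈ closure S) : a * g ∈ closure (S * S) ∨ g ∈ closure (S * S) := by
  have step : ∀ s ∈ S, ∀ y, a * y ∈ closure (S * S) ∨ y ∈ closure (S * S) →
      a * (s * y) ∈ closure (S * S) ∨ s * y ∈ closure (S * S) := by
    rintro s hs y (hy | hy)
    · right
      rw [show s * y = (s * a⁻¹) * (a * y) by group]
      exact mul_mem (subset_closure (Set.mul_mem_mul hs (hS (Set.inv_mem_inv.2 ha)))) hy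
    · left
      rw [← mul_assoc]
      exact mul_mem (subset_closure (Set.mul_mem_mul ha hs)) hy
  induction hg using closure_induction_left with
  | one => exact .inr (one_mem _)
  | mul_left s hs y _ ih => exact step s hs y ih
  | inv_mul_cancel s hs y _ ih => exact step s⁻¹ (hS (Set.inv_mem_inv.2 hs)) y ih

end Subgroup

section Involutions

variable {G : Type*} [Group G]

theorem inv_eq_self_of_sq_eq_one {a : G} (h : a ^ 2 = 1) : a⁻¹ = a :=
  inv_eq_iff_mul_eq_one.2 (sq a ▸ h)

theorem commute_mul_mul_of_sq_eq_one {a b c : G} (ha : a ^ 2 = 1)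
    (hb : b ^ 2 = 1) (hc : c ^ 2 = 1) (habc : (a * b * c) ^ 2 = 1) : Commute (a * b) (b * c) :=
  calc a * b * (b * c) = a * b ^ 2 * c := by simp only [sq, mul_assoc]
    _ = a⁻¹ * (a * b * c) ^ 2 * c⁻¹ := by
      rw [hb, habc, mul_one, mul_one, inv_eq_self_of_sq_eq_one ha, inv_eq_self_of_sq_eq_one hc]
    _ = b * c * (a * b) := by rw [sq]; group

end Involutions

/-- Let `G` be a group generated by three involutions `h₀, h₁, h_c` whose product is
also an involution (or the identity).  Then `G` is virtually commutative: the set of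
elements expressible as products of an even number of the generators forms a
commutative normal subgroup of index at most 2. -/
theorem virtually_commutative_of_three_involutions
    (G : Type*) [Group G] (h₀ h₁ hc : G)
    (hh₀ : h₀ ^ 2 = 1) (hh₁ : h₁ ^ 2 = 1) (hhc : hc ^ 2 = 1)
    (hprod : (h₀ * h₁ * hc) ^ 2 = 1)
    (hgen : Subgroup.closure {h₀, h₁, hc} = ⊤) :
    ∃ N : Subgroup G,
      (∀ g : G, g ∈ N ↔ ∃ l : List G,
        (∀ x ∈ l, x ∈ ({h₀, h₁, hc} : Set G)) ∧ Even l.length ∧ g = l.prod) ∧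
      N.Normal ∧ (∀ x ∈ N, ∀ y ∈ N, x * y = y * x) ∧ N.index ≤ 2 := by
  set S : Set G := {h₀, h₁, hc}
  have hS : S⁻¹ ⊆ S := by
    simp [S, Set.inv_insert, inv_eq_self_of_sq_eq_one, hh₀, hh₁, hhc]
  set N := Subgroup.closure (S * S)
  set K := Subgroup.closure {h₀ * h₁, h₁ * hc}
  have hindex : N.index = 1 ∨ N.index = 2 :=
    Subgroup.index_eq_one_or_eq_two_of_forall_mul_mem_or_mem h₀ fun g =>
      Subgroup.mul_mem_closure_mul_self_or_mem hS (by simp [S]) (hgen ▸ Subgroup.mem_top g)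
  have hcomm : IsMulCommutative K := by
    refine Subgroup.isMulCommutative_closure ?_
    have := commute_mul_mul_of_sq_eq_one hh₀ hh₁ hhc hprod
    rintro x (rfl | rfl) y (rfl | rfl)
    exacts [rfl, this, this.symm, rfl]
  have hle : N ≤ K := by
    refine Subgroup.closure_mul_self_le_of_forall_mul_mem hS h₁ ?_
    rintro s (rfl | rfl | rfl)
    · rw [show h₁ * s = (s * h₁)⁻¹ by
        rw [mul_inv_rev, inv_eq_self_of_sq_eq_one hh₀, inv_eq_self_of_sq_eq_one hh₁]]
      exact inv_mem (Subgroup.subset_closure (by simp))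
    · exact sq s ▸ hh₁ ▸ one_mem K
    · exact Subgroup.subset_closure (by simp)
  refine ⟨N, fun g => Subgroup.mem_closure_mul_self_iff hS, ?_, ?_, by omega⟩
  · exact Subgroup.normal_of_index_eq_one_or_eq_two hindex
  · exact fun x hx y hy => setLike_mul_comm (hle hx) (hle hy)
end

section
/- If M ⊆ GLₙ(ℂ) is a virtually commutative subgroup, then its Zariski closure in GLₙ(ℂ) is also virtually commutative. -/
/-- A subset of `GLₙ(ℂ)` is Zariski closed if it is cut out by polynomial equations in
the matrix entries. -/
def IsZariskiClosed {n : ℕ} (s : Set (GL (Fin n) ℂ)) : Prop :=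
  ∃ I : Set (MvPolynomial (Fin n × Fin n) ℂ),
    s = {A : GL (Fin n) ℂ | ∀ p ∈ I,
      MvPolynomial.eval (fun ij => (A : Matrix (Fin n) (Fin n) ℂ) ij.1 ij.2) p = 0}

/-- The Zariski closure of a subgroup of `GLₙ(ℂ)`: the intersection of all Zariski
closed subgroups containing it. -/
def zariskiClosure {n : ℕ} (M : Subgroup (GL (Fin n) ℂ)) : Subgroup (GL (Fin n) ℂ) :=
  ⨅ H ∈ {H : Subgroup (GL (Fin n) ℂ) | M ≤ H ∧ IsZariskiClosed (H : Set (GL (Fin n) ℂ))}, H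

open MvPolynomial Matrix

namespace ZCaux

variable {n : ℕ}

abbrev Rn (n : ℕ) := MvPolynomial (Fin n × Fin n) ℂ

noncomputable def ev (g : GL (Fin n) ℂ) : Rn n →+* ℂ :=
  MvPolynomial.eval fun ij => (g : Matrix (Fin n) (Fin n) ℂ) ij.1 ij.2

noncomputable def Xmat (n : ℕ) : Matrix (Fin n) (Fin n) (Rn n) := Matrix.of fun i j => X (i, j)

noncomputable def liftM (A : Matrix (Fin n) (Fin n) ℂ) : Matrix (Fin n) (Fin n) (Rn n) :=
  A.map MvPolynomial.C

lemma ev_Xmat (g : GL (Fin n) ℂ) : (ev g).mapMatrix (Xmat n) = (g : Matrix (Fin n) (Fin n) ℂ) := by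
  ext i j; simp [ev, Xmat, RingHom.mapMatrix_apply, Matrix.map_apply]

lemma ev_liftM (g : GL (Fin n) ℂ) (A : Matrix (Fin n) (Fin n) ℂ) :
    (ev g).mapMatrix (liftM A) = A := by
  ext i j; simp [ev, liftM, RingHom.mapMatrix_apply, Matrix.map_apply]

lemma ev_det (g : GL (Fin n) ℂ) : ev g (Xmat n).det = (g : Matrix (Fin n) (Fin n) ℂ).det := by
  rw [RingHom.map_det, ev_Xmat]

lemma mul_inv_coe (g : GL (Fin n) ℂ) :
    (g : Matrix (Fin n) (Fin n) ℂ) * ((g⁻¹ : GL (Fin n) ℂ) : Matrix (Fin n) (Fin n) ℂ) = 1 := by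
  rw [← Units.val_mul, mul_inv_cancel, Units.val_one]

lemma det_ne_zero (g : GL (Fin n) ℂ) : (g : Matrix (Fin n) (Fin n) ℂ).det ≠ 0 := by
  have := congrArg Matrix.det (mul_inv_coe g)
  rw [Matrix.det_mul, Matrix.det_one] at this
  exact left_ne_zero_of_mul_eq_one this

lemma adj_eq (g : GL (Fin n) ℂ) :
    adjugate (g : Matrix (Fin n) (Fin n) ℂ) =
      (g : Matrix (Fin n) (Fin n) ℂ).det • ((g⁻¹ : GL (Fin n) ℂ) : Matrix (Fin n) (Fin n) ℂ) := by
  calc adjugate (g : Matrix (Fin n) (Fin n) ℂ)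
      = adjugate (g : Matrix (Fin n) (Fin n) ℂ) *
        ((g : Matrix (Fin n) (Fin n) ℂ) * ((g⁻¹ : GL (Fin n) ℂ) : Matrix (Fin n) (Fin n) ℂ)) := by
        rw [mul_inv_coe, mul_one]
    _ = (adjugate (g : Matrix (Fin n) (Fin n) ℂ) * (g : Matrix (Fin n) (Fin n) ℂ)) *
        ((g⁻¹ : GL (Fin n) ℂ) : Matrix (Fin n) (Fin n) ℂ) := by rw [mul_assoc]
    _ = _ := by rw [Matrix.adjugate_mul, Matrix.smul_mul, Matrix.one_mul]

/-! ### Closed sets toolbox -/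

lemma isZariskiClosed_univ : IsZariskiClosed (Set.univ : Set (GL (Fin n) ℂ)) :=
  ⟨∅, by ext g; simp⟩

lemma isZariskiClosed_empty : IsZariskiClosed (∅ : Set (GL (Fin n) ℂ)) :=
  ⟨{1}, by ext g; simp⟩

lemma isZariskiClosed_iInter {ι : Sort*} {f : ι → Set (GL (Fin n) ℂ)}
    (h : ∀ i, IsZariskiClosed (f i)) : IsZariskiClosed (⋂ i, f i) := by
  choose I hI using h
  refine ⟨⋃ i, I i, ?_⟩
  ext g
  simp only [Set.mem_iInter, Set.mem_setOf_eq, Set.mem_iUnion]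
  constructor
  · rintro hg p ⟨i, hp⟩
    have := hg i
    rw [hI i] at this
    exact this p hp
  · intro hg i
    rw [hI i]
    exact fun p hp => hg p ⟨i, hp⟩

lemma isZariskiClosed_inter {s t : Set (GL (Fin n) ℂ)} (hs : IsZariskiClosed s)
    (ht : IsZariskiClosed t) : IsZariskiClosed (s ∩ t) := by
  obtain ⟨I, rfl⟩ := hs; obtain ⟨J, rfl⟩ := ht
  refine ⟨I ∪ J, ?_⟩
  ext g
  simp only [Set.mem_inter_iff, Set.mem_setOf_eq, Set.mem_union]
  constructor
  · rintro ⟨h1, h2⟩ p (hp | hp)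
    exacts [h1 p hp, h2 p hp]
  · exact fun h => ⟨fun p hp => h p (Or.inl hp), fun p hp => h p (Or.inr hp)⟩

lemma isZariskiClosed_union {s t : Set (GL (Fin n) ℂ)} (hs : IsZariskiClosed s)
    (ht : IsZariskiClosed t) : IsZariskiClosed (s ∪ t) := by
  obtain ⟨I, rfl⟩ := hs; obtain ⟨J, rfl⟩ := ht
  refine ⟨Set.image2 (· * ·) I J, ?_⟩
  ext g
  simp only [Set.mem_union, Set.mem_setOf_eq]
  constructor
  · rintro (hg | hg) p hp <;> obtain ⟨a, ha, b, hb, rfl⟩ := hp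
    · rw [_root_.map_mul, hg a ha, zero_mul]
    · rw [_root_.map_mul, hg b hb, mul_zero]
  · intro hg
    by_cases hI : ∀ p ∈ I, MvPolynomial.eval
        (fun ij => (g : Matrix (Fin n) (Fin n) ℂ) ij.1 ij.2) p = 0
    · exact Or.inl hI
    · push_neg at hI
      obtain ⟨a, haI, ha0⟩ := hI
      refine Or.inr fun q hq => ?_
      have := hg (a * q) (Set.mem_image2_of_mem haI hq)
      rw [_root_.map_mul] at this
      exact (mul_eq_zero.mp this).resolve_left ha0

lemma isZariskiClosed_iUnion {ι : Type*} [Finite ι] {f : ι → Set (GL (Fin n) ℂ)}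
    (h : ∀ i, IsZariskiClosed (f i)) : IsZariskiClosed (⋃ i, f i) := by
  cases nonempty_fintype ι
  classical
  have key : ∀ s : Finset ι, IsZariskiClosed (⋃ i ∈ s, f i) := by
    intro s
    induction s using Finset.induction_on with
    | empty => simpa using isZariskiClosed_empty
    | insert _ _ hne ih => rw [Finset.set_biUnion_insert]; exact isZariskiClosed_union (h _) ih
  simpa using key Finset.univ

/-! ### The denominator-clearing trick -/

noncomputable def clear (p D : Rn n) (u : Fin n × Fin n → Rn n) : Rn n :=
  ∑ m ∈ p.support, MvPolynomial.C (MvPolynomial.coeff m p) *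
    D ^ (p.totalDegree - m.sum fun _ e => e) * ∏ ij ∈ m.support, u ij ^ m ij

lemma ev_clear (f : Rn n →+* ℂ) (hC : ∀ a : ℂ, f (MvPolynomial.C a) = a)
    (p D : Rn n) (u : Fin n × Fin n → Rn n) (c : ℂ) (v : Fin n × Fin n → ℂ)
    (hD : f D = c) (hu : ∀ ij, f (u ij) = c * v ij) :
    f (clear p D u) = c ^ p.totalDegree * MvPolynomial.eval v p := by
  rw [clear, map_sum, eval_eq, Finset.mul_sum]
  refine Finset.sum_congr rfl fun m hm => ?_
  rw [_root_.map_mul, _root_.map_mul, hC, map_pow, hD, map_prod]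
  simp_rw [map_pow, hu, mul_pow]
  rw [Finset.prod_mul_distrib, Finset.prod_pow_eq_pow_sum]
  have hle : (m.sum fun _ e => e) ≤ p.totalDegree := le_totalDegree hm
  have hs : (∑ ij ∈ m.support, m ij) = m.sum fun _ e => e := rfl
  have hc : c ^ (p.totalDegree - m.sum fun _ e => e) * c ^ (m.sum fun _ e => e)
      = c ^ p.totalDegree := by
    rw [← pow_add, Nat.sub_add_cancel hle]
  rw [hs, ← hc]
  ring

lemma isZariskiClosed_preimage (F : GL (Fin n) ℂ → GL (Fin n) ℂ)
    (P : Matrix (Fin n) (Fin n) (Rn n))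
    (hP : ∀ g : GL (Fin n) ℂ, (ev g).mapMatrix P =
      (g : Matrix (Fin n) (Fin n) ℂ).det • ((F g : Matrix (Fin n) (Fin n) ℂ)))
    {s : Set (GL (Fin n) ℂ)} (hs : IsZariskiClosed s) :
    IsZariskiClosed (F ⁻¹' s) := by
  obtain ⟨I, rfl⟩ := hs
  refine ⟨(fun p => clear p (Xmat n).det fun ij => P ij.1 ij.2) '' I, ?_⟩
  ext g
  simp only [Set.mem_preimage, Set.mem_setOf_eq, Set.forall_mem_image]
  have key : ∀ p : Rn n,
      ev g (clear p (Xmat n).det fun ij => P ij.1 ij.2) =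
        ((g : Matrix (Fin n) (Fin n) ℂ).det) ^ p.totalDegree * ev (F g) p := by
    intro p
    refine ev_clear _ (fun a => eval_C a) _ _ _ _ _ (ev_det g) fun ij => ?_
    simpa [RingHom.mapMatrix_apply, Matrix.map_apply, Matrix.smul_apply, smul_eq_mul, ev] using
      congr_arg (fun M => M ij.1 ij.2) (hP g)
  constructor
  · intro hg p hp
    show ev g _ = 0
    rw [key p]
    have : ev (F g) p = 0 := hg p hp
    rw [this, mul_zero]
  · intro hg p hp
    have h0 : ev g (clear p (Xmat n).det fun ij => P ij.1 ij.2) = 0 := hg hp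
    rw [key p] at h0
    exact (mul_eq_zero.mp h0).resolve_left (pow_ne_zero _ (det_ne_zero g))

/-! ### Specific continuous maps -/

noncomputable def dscale (Q : Matrix (Fin n) (Fin n) (Rn n)) : Matrix (Fin n) (Fin n) (Rn n) :=
  Matrix.of fun i j => (Xmat n).det * Q i j

lemma ev_dscale (g : GL (Fin n) ℂ) (Q : Matrix (Fin n) (Fin n) (Rn n)) :
    (ev g).mapMatrix (dscale Q) = (g : Matrix (Fin n) (Fin n) ℂ).det • ((ev g).mapMatrix Q) := by
  ext i j
  simp only [RingHom.mapMatrix_apply, Matrix.map_apply, dscale, Matrix.of_apply,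
    Matrix.smul_apply, smul_eq_mul, _root_.map_mul]
  rw [ev_det]

lemma closed_preimage_mul_left (a : GL (Fin n) ℂ) {s : Set (GL (Fin n) ℂ)}
    (hs : IsZariskiClosed s) : IsZariskiClosed ((fun g => a * g) ⁻¹' s) := by
  refine isZariskiClosed_preimage _ (dscale (liftM (a : Matrix (Fin n) (Fin n) ℂ) * Xmat n))
    (fun g => ?_) hs
  rw [ev_dscale, _root_.map_mul, ev_liftM, ev_Xmat, Units.val_mul]

lemma closed_preimage_mul_right (a : GL (Fin n) ℂ) {s : Set (GL (Fin n) ℂ)}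
    (hs : IsZariskiClosed s) : IsZariskiClosed ((fun g => g * a) ⁻¹' s) := by
  refine isZariskiClosed_preimage _ (dscale (Xmat n * liftM (a : Matrix (Fin n) (Fin n) ℂ)))
    (fun g => ?_) hs
  rw [ev_dscale, _root_.map_mul, ev_liftM, ev_Xmat, Units.val_mul]

lemma closed_preimage_inv {s : Set (GL (Fin n) ℂ)}
    (hs : IsZariskiClosed s) : IsZariskiClosed ((fun g => g⁻¹) ⁻¹' s) := by
  refine isZariskiClosed_preimage _ (adjugate (Xmat n)) (fun g => ?_) hs
  rw [RingHom.map_adjugate, ev_Xmat, adj_eq]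

lemma closed_preimage_conj (k : GL (Fin n) ℂ) {s : Set (GL (Fin n) ℂ)}
    (hs : IsZariskiClosed s) : IsZariskiClosed ((fun g => g * k * g⁻¹) ⁻¹' s) := by
  refine isZariskiClosed_preimage _
    (Xmat n * liftM (k : Matrix (Fin n) (Fin n) ℂ) * adjugate (Xmat n)) (fun g => ?_) hs
  rw [_root_.map_mul, _root_.map_mul, RingHom.map_adjugate, ev_Xmat, ev_liftM, adj_eq,
    Matrix.mul_smul, Units.val_mul, Units.val_mul]

lemma closed_preimage_conj' (k : GL (Fin n) ℂ) {s : Set (GL (Fin n) ℂ)}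
    (hs : IsZariskiClosed s) : IsZariskiClosed ((fun g => g⁻¹ * k * g) ⁻¹' s) := by
  refine isZariskiClosed_preimage _
    (adjugate (Xmat n) * liftM (k : Matrix (Fin n) (Fin n) ℂ) * Xmat n) (fun g => ?_) hs
  rw [_root_.map_mul, _root_.map_mul, RingHom.map_adjugate, ev_Xmat, ev_liftM, adj_eq,
    Matrix.smul_mul, Matrix.smul_mul, Units.val_mul, Units.val_mul]

/-! ### Commutation sets and centralizers -/

lemma isZariskiClosed_commSet (a : GL (Fin n) ℂ) :
    IsZariskiClosed {x : GL (Fin n) ℂ | a * x = x * a} := by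
  refine ⟨Set.range fun ij : Fin n × Fin n =>
    (liftM (a : Matrix (Fin n) (Fin n) ℂ) * Xmat n
      - Xmat n * liftM (a : Matrix (Fin n) (Fin n) ℂ)) ij.1 ij.2, ?_⟩
  ext g
  simp only [Set.mem_setOf_eq, Set.forall_mem_range]
  have hev : ∀ ij : Fin n × Fin n,
      ev g ((liftM (a : Matrix (Fin n) (Fin n) ℂ) * Xmat n
        - Xmat n * liftM (a : Matrix (Fin n) (Fin n) ℂ)) ij.1 ij.2)
        = ((a : Matrix (Fin n) (Fin n) ℂ) * (g : Matrix (Fin n) (Fin n) ℂ)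
          - (g : Matrix (Fin n) (Fin n) ℂ) * (a : Matrix (Fin n) (Fin n) ℂ)) ij.1 ij.2 := by
    intro ij
    have : (ev g).mapMatrix (liftM (a : Matrix (Fin n) (Fin n) ℂ) * Xmat n
        - Xmat n * liftM (a : Matrix (Fin n) (Fin n) ℂ))
        = (a : Matrix (Fin n) (Fin n) ℂ) * (g : Matrix (Fin n) (Fin n) ℂ)
          - (g : Matrix (Fin n) (Fin n) ℂ) * (a : Matrix (Fin n) (Fin n) ℂ) := by
      rw [map_sub, _root_.map_mul, _root_.map_mul, ev_liftM, ev_Xmat]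
    simpa [RingHom.mapMatrix_apply, Matrix.map_apply] using
      congr_arg (fun M => M ij.1 ij.2) this
  constructor
  · intro h ij
    show ev g _ = 0
    rw [hev ij]
    have : (a : Matrix (Fin n) (Fin n) ℂ) * (g : Matrix (Fin n) (Fin n) ℂ)
        = (g : Matrix (Fin n) (Fin n) ℂ) * (a : Matrix (Fin n) (Fin n) ℂ) := by
      rw [← Units.val_mul, ← Units.val_mul, h]
    rw [Matrix.sub_apply, this, sub_self]
  · intro h
    have hmat : (a : Matrix (Fin n) (Fin n) ℂ) * (g : Matrix (Fin n) (Fin n) ℂ)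
        = (g : Matrix (Fin n) (Fin n) ℂ) * (a : Matrix (Fin n) (Fin n) ℂ) := by
      ext i j
      have h0 : ev g _ = 0 := h (i, j)
      rw [hev (i, j)] at h0
      simpa [Matrix.sub_apply, sub_eq_zero] using h0
    exact Units.ext (by simpa [Units.val_mul] using hmat)

lemma isZariskiClosed_centralizer (s : Set (GL (Fin n) ℂ)) :
    IsZariskiClosed (Subgroup.centralizer s : Set (GL (Fin n) ℂ)) := by
  have h : (Subgroup.centralizer s : Set (GL (Fin n) ℂ))
      = ⋂ a : s, {x : GL (Fin n) ℂ | (a : GL (Fin n) ℂ) * x = x * a} := by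
    ext x
    simp only [SetLike.mem_coe, Subgroup.mem_centralizer_iff, Set.mem_iInter, Set.mem_setOf_eq]
    exact ⟨fun h a => h a a.2, fun h a ha => h ⟨a, ha⟩⟩
  rw [h]
  exact isZariskiClosed_iInter fun a => isZariskiClosed_commSet a.1

/-! ### Zariski closure of subgroups -/

lemma le_zariskiClosure (M : Subgroup (GL (Fin n) ℂ)) : M ≤ zariskiClosure M :=
  le_iInf₂ fun _ hH => hH.1

lemma zariskiClosure_le {M H : Subgroup (GL (Fin n) ℂ)} (h1 : M ≤ H)
    (h2 : IsZariskiClosed (H : Set (GL (Fin n) ℂ))) : zariskiClosure M ≤ H :=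
  iInf₂_le H ⟨h1, h2⟩

lemma isZariskiClosed_coe_zariskiClosure (M : Subgroup (GL (Fin n) ℂ)) :
    IsZariskiClosed (zariskiClosure M : Set (GL (Fin n) ℂ)) := by
  have h : (zariskiClosure M : Set (GL (Fin n) ℂ))
      = ⋂ (H : Subgroup (GL (Fin n) ℂ)),
        ⋂ (_ : M ≤ H ∧ IsZariskiClosed (H : Set (GL (Fin n) ℂ))), (H : Set (GL (Fin n) ℂ)) := by
    rw [zariskiClosure, Subgroup.coe_iInf]
    exact Set.iInter_congr fun H => Subgroup.coe_iInf
  rw [h]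
  exact isZariskiClosed_iInter fun H => isZariskiClosed_iInter fun hH => hH.2

/-! ### Set-level Zariski closure -/

noncomputable def zcl (s : Set (GL (Fin n) ℂ)) : Set (GL (Fin n) ℂ) :=
  ⋂ t : {t : Set (GL (Fin n) ℂ) // s ⊆ t ∧ IsZariskiClosed t}, (t : Set (GL (Fin n) ℂ))

lemma isZariskiClosed_zcl (s : Set (GL (Fin n) ℂ)) : IsZariskiClosed (zcl s) :=
  isZariskiClosed_iInter fun t => t.2.2

lemma subset_zcl (s : Set (GL (Fin n) ℂ)) : s ⊆ zcl s :=
  fun x hx => Set.mem_iInter.2 fun t => t.2.1 hx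

lemma zcl_subset {s t : Set (GL (Fin n) ℂ)} (h1 : s ⊆ t) (h2 : IsZariskiClosed t) :
    zcl s ⊆ t :=
  fun x hx => Set.mem_iInter.1 hx ⟨t, h1, h2⟩

end ZCaux

open ZCaux

/-- If `M ⊆ GLₙ(ℂ)` is a virtually commutative subgroup, then its Zariski closure in
`GLₙ(ℂ)` is also virtually commutative. -/
theorem zariskiClosure_virtually_commutative {n : ℕ} (M : Subgroup (GL (Fin n) ℂ))
    (hM : ∃ N : Subgroup M, N.Normal ∧ (∀ x ∈ N, ∀ y ∈ N, x * y = y * x) ∧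
      N.FiniteIndex) :
    ∃ N : Subgroup (zariskiClosure M), N.Normal ∧
      (∀ x ∈ N, ∀ y ∈ N, x * y = y * x) ∧ N.FiniteIndex := by
  classical
  obtain ⟨N, hNnorm, hNcomm, hNfin⟩ := hM
  set N' : Subgroup (GL (Fin n) ℂ) := N.map M.subtype with hN'def
  set K : Subgroup (GL (Fin n) ℂ) := zariskiClosure N' with hKdef
  set G : Subgroup (GL (Fin n) ℂ) := zariskiClosure M with hGdef
  have hKclosed : IsZariskiClosed (K : Set (GL (Fin n) ℂ)) :=
    isZariskiClosed_coe_zariskiClosure N'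
  have hN'K : N' ≤ K := le_zariskiClosure N'
  have hMG : M ≤ G := le_zariskiClosure M
  -- commutativity of N'
  have hN'comm : ∀ a ∈ N', ∀ b ∈ N', a * b = b * a := by
    rintro a ⟨x, hx, rfl⟩ b ⟨y, hy, rfl⟩
    rw [← _root_.map_mul, ← _root_.map_mul, hNcomm x hx y hy]
  -- commutativity of K
  have hKle1 : K ≤ Subgroup.centralizer (N' : Set (GL (Fin n) ℂ)) :=
    zariskiClosure_le
      (fun a ha => Subgroup.mem_centralizer_iff.2 fun b hb => hN'comm b hb a ha)
      (isZariskiClosed_centralizer _)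
  have hKle2 : K ≤ Subgroup.centralizer (K : Set (GL (Fin n) ℂ)) :=
    zariskiClosure_le
      (fun a ha => Subgroup.mem_centralizer_iff.2 fun k hk =>
        (Subgroup.mem_centralizer_iff.1 (hKle1 hk) a ha).symm)
      (isZariskiClosed_centralizer _)
  have hKcomm : ∀ x ∈ K, ∀ y ∈ K, x * y = y * x := by
    intro x hx y hy
    exact Subgroup.mem_centralizer_iff.1 (hKle2 hy) x hx
  -- step 1 : M normalizes K
  have step1 : ∀ m ∈ M, ∀ x ∈ K, m * x * m⁻¹ ∈ K := by
    intro m hm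
    have hclosed : IsZariskiClosed {x : GL (Fin n) ℂ | m * x * m⁻¹ ∈ K} := by
      have : {x : GL (Fin n) ℂ | m * x * m⁻¹ ∈ K}
          = (fun x => m * x) ⁻¹' ((fun y => y * m⁻¹) ⁻¹' (K : Set (GL (Fin n) ℂ))) := rfl
      rw [this]
      exact closed_preimage_mul_left m (closed_preimage_mul_right m⁻¹ hKclosed)
    have hsub : {x : GL (Fin n) ℂ | m * x * m⁻¹ ∈ K}
        = ((K.comap ((MulAut.conj m).toMonoidHom : GL (Fin n) ℂ →* GL (Fin n) ℂ)
            : Subgroup (GL (Fin n) ℂ)) : Set (GL (Fin n) ℂ)) := by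
      ext x
      simp only [Set.mem_setOf_eq, SetLike.mem_coe, Subgroup.mem_comap]
      rfl
    have hle : K ≤ K.comap ((MulAut.conj m).toMonoidHom : GL (Fin n) ℂ →* GL (Fin n) ℂ) := by
      refine zariskiClosure_le (fun a ha => ?_) (by rw [← hsub]; exact hclosed)
      rw [Subgroup.mem_comap]
      obtain ⟨x, hx, rfl⟩ := ha
      have hconj : (⟨m, hm⟩ : M) * x * (⟨m, hm⟩ : M)⁻¹ ∈ N := hNnorm.conj_mem x hx ⟨m, hm⟩
      have : ((MulAut.conj m).toMonoidHom : GL (Fin n) ℂ →* GL (Fin n) ℂ) (M.subtype x)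
          = M.subtype ((⟨m, hm⟩ : M) * x * (⟨m, hm⟩ : M)⁻¹) := by
        simp [MulAut.conj_apply]
      rw [this]
      exact hN'K ⟨_, hconj, rfl⟩
    intro x hx
    have := hle hx
    rw [Subgroup.mem_comap] at this
    exact this
  -- the subgroup of elements normalizing K on both sides
  let D : Subgroup (GL (Fin n) ℂ) :=
    { carrier := {g | (∀ k ∈ K, g * k * g⁻¹ ∈ K) ∧ (∀ k ∈ K, g⁻¹ * k * g ∈ K)}
      one_mem' := by simp
      mul_mem' := by
        rintro a b ⟨ha1, ha2⟩ ⟨hb1, hb2⟩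
        refine ⟨fun k hk => ?_, fun k hk => ?_⟩
        · have h : (a * b) * k * (a * b)⁻¹ = a * (b * k * b⁻¹) * a⁻¹ := by group
          rw [h]; exact ha1 _ (hb1 k hk)
        · have h : (a * b)⁻¹ * k * (a * b) = b⁻¹ * (a⁻¹ * k * a) * b := by group
          rw [h]; exact hb2 _ (ha2 k hk)
      inv_mem' := by
        rintro a ⟨h1, h2⟩
        refine ⟨fun k hk => ?_, fun k hk => ?_⟩
        · rw [inv_inv]; exact h2 k hk
        · rw [inv_inv]; exact h1 k hk }
  have hDclosed : IsZariskiClosed (D : Set (GL (Fin n) ℂ)) := by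
    have h1 : {g : GL (Fin n) ℂ | ∀ k ∈ K, g * k * g⁻¹ ∈ K}
        = ⋂ k : (K : Set (GL (Fin n) ℂ)),
          (fun g : GL (Fin n) ℂ => g * (k : GL (Fin n) ℂ) * g⁻¹) ⁻¹' (K : Set (GL (Fin n) ℂ)) := by
      ext g
      simp only [Set.mem_setOf_eq, Set.mem_iInter, Set.mem_preimage, SetLike.mem_coe]
      exact ⟨fun h k => h k k.2, fun h k hk => h ⟨k, hk⟩⟩
    have h2 : {g : GL (Fin n) ℂ | ∀ k ∈ K, g⁻¹ * k * g ∈ K}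
        = ⋂ k : (K : Set (GL (Fin n) ℂ)),
          (fun g : GL (Fin n) ℂ => g⁻¹ * (k : GL (Fin n) ℂ) * g) ⁻¹' (K : Set (GL (Fin n) ℂ)) := by
      ext g
      simp only [Set.mem_setOf_eq, Set.mem_iInter, Set.mem_preimage, SetLike.mem_coe]
      exact ⟨fun h k => h k k.2, fun h k hk => h ⟨k, hk⟩⟩
    have hD : (D : Set (GL (Fin n) ℂ))
        = {g : GL (Fin n) ℂ | ∀ k ∈ K, g * k * g⁻¹ ∈ K}
          ∩ {g : GL (Fin n) ℂ | ∀ k ∈ K, g⁻¹ * k * g ∈ K} := rfl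
    rw [hD, h1, h2]
    exact isZariskiClosed_inter
      (isZariskiClosed_iInter fun k => closed_preimage_conj _ hKclosed)
      (isZariskiClosed_iInter fun k => closed_preimage_conj' _ hKclosed)
  have hMD : M ≤ D := by
    intro m hm
    refine ⟨step1 m hm, fun k hk => ?_⟩
    have := step1 m⁻¹ (inv_mem hm) k hk
    rwa [inv_inv] at this
  have hGD : G ≤ D := zariskiClosure_le hMD hDclosed
  have hnormal : ∀ g ∈ G, ∀ k ∈ K, g * k * g⁻¹ ∈ K := fun g hg => (hGD hg).1
  -- the set-level closure of M agrees with G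
  have hclM : (G : Set (GL (Fin n) ℂ)) ⊆ zcl (M : Set (GL (Fin n) ℂ)) := by
    have stepA : ∀ m ∈ M, ∀ x ∈ zcl (M : Set (GL (Fin n) ℂ)),
        m * x ∈ zcl (M : Set (GL (Fin n) ℂ)) := by
      intro m hm
      have : zcl (M : Set (GL (Fin n) ℂ))
          ⊆ (fun x => m * x) ⁻¹' zcl (M : Set (GL (Fin n) ℂ)) :=
        zcl_subset (fun x hx => subset_zcl _ (M.mul_mem hm hx))
          (closed_preimage_mul_left m (isZariskiClosed_zcl _))
      exact fun x hx => this hx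
    let clSub : Subgroup (GL (Fin n) ℂ) :=
      { carrier := zcl (M : Set (GL (Fin n) ℂ))
        one_mem' := subset_zcl _ M.one_mem
        mul_mem' := by
          intro a b ha hb
          have : zcl (M : Set (GL (Fin n) ℂ))
              ⊆ (fun x => x * b) ⁻¹' zcl (M : Set (GL (Fin n) ℂ)) :=
            zcl_subset (fun m hm => stepA m hm b hb)
              (closed_preimage_mul_right b (isZariskiClosed_zcl _))
          exact this ha
        inv_mem' := by
          intro a ha
          have : zcl (M : Set (GL (Fin n) ℂ))
              ⊆ (fun x => x⁻¹) ⁻¹' zcl (M : Set (GL (Fin n) ℂ)) :=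
            zcl_subset (fun m hm => subset_zcl _ (M.inv_mem hm))
              (closed_preimage_inv (isZariskiClosed_zcl _))
          exact this ha }
    have : G ≤ clSub :=
      zariskiClosure_le (fun m hm => subset_zcl _ hm) (isZariskiClosed_zcl _)
    exact fun g hg => this hg
  -- coset covering
  haveI : Finite (M ⧸ N) := N.finite_quotient_of_finiteIndex
  have hcover : ∀ g ∈ G, ∃ q : M ⧸ N, ((q.out : M) : GL (Fin n) ℂ)⁻¹ * g ∈ K := by
    have hU : IsZariskiClosed (⋃ q : M ⧸ N,
        (fun g => ((q.out : M) : GL (Fin n) ℂ)⁻¹ * g) ⁻¹' (K : Set (GL (Fin n) ℂ))) :=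
      isZariskiClosed_iUnion fun q => closed_preimage_mul_left _ hKclosed
    have hMU : (M : Set (GL (Fin n) ℂ)) ⊆ ⋃ q : M ⧸ N,
        (fun g => ((q.out : M) : GL (Fin n) ℂ)⁻¹ * g) ⁻¹' (K : Set (GL (Fin n) ℂ)) := by
      intro m hm
      refine Set.mem_iUnion.2 ⟨QuotientGroup.mk (⟨m, hm⟩ : M), ?_⟩
      have hq : ((QuotientGroup.mk (⟨m, hm⟩ : M) : M ⧸ N).out)⁻¹ * (⟨m, hm⟩ : M) ∈ N := by
        rw [← QuotientGroup.eq]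
        exact QuotientGroup.out_eq' _
      show ((((QuotientGroup.mk (⟨m, hm⟩ : M) : M ⧸ N).out : M) : GL (Fin n) ℂ))⁻¹ * m
        ∈ (K : Set (GL (Fin n) ℂ))
      have : ((((QuotientGroup.mk (⟨m, hm⟩ : M) : M ⧸ N).out : M) : GL (Fin n) ℂ))⁻¹ * m
          = M.subtype (((QuotientGroup.mk (⟨m, hm⟩ : M) : M ⧸ N).out)⁻¹ * (⟨m, hm⟩ : M)) := by
        simp [Subgroup.coe_mul]
      rw [this]
      exact hN'K ⟨_, hq, rfl⟩
    intro g hg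
    have := zcl_subset hMU hU (hclM hg)
    exact Set.mem_iUnion.1 this
  -- assemble
  refine ⟨K.subgroupOf G, ?_, ?_, ?_⟩
  · constructor
    intro k hk g
    rw [Subgroup.mem_subgroupOf] at hk ⊢
    have : ((g * k * g⁻¹ : G) : GL (Fin n) ℂ) = (g : GL (Fin n) ℂ) * k * (g : GL (Fin n) ℂ)⁻¹ := by
      simp
    rw [this]
    exact hnormal g g.2 k hk
  · intro x hx y hy
    rw [Subgroup.mem_subgroupOf] at hx hy
    refine Subtype.ext ?_
    rw [Subgroup.coe_mul, Subgroup.coe_mul]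
    exact hKcomm _ hx _ hy
  · have hsurj : Function.Surjective
        (fun q : M ⧸ N => (QuotientGroup.mk (⟨((q.out : M) : GL (Fin n) ℂ), hMG (q.out).2⟩ : G)
          : G ⧸ K.subgroupOf G)) := by
      intro x
      induction x using QuotientGroup.induction_on with
      | H g =>
        obtain ⟨q, hq⟩ := hcover (g : GL (Fin n) ℂ) g.2
        refine ⟨q, ?_⟩
        rw [QuotientGroup.eq]
        rw [Subgroup.mem_subgroupOf]
        simpa using hq
    haveI : Finite (G ⧸ K.subgroupOf G) := Finite.of_surjective _ hsurj
    exact Subgroup.finiteIndex_of_finite_quotient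
end
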